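/- Let F : [0,T] → ℂ^{r×p} and G : [0,T] → ℂ^{p×r} be continuously differentiable with F(x)G(x) = I_r for all x. Let u₁(x,λ) solve u₁′ = λ G F u₁ with u₁(0,λ) = I_p, and let ũ₁ solve ũ₁′ = −G F′ ũ₁, ũ₁(0) = I_p. Then for all x: d/dx [ ũ₁(x)⁻¹ (I_p − G(x)F(x)) u₁(x,λ) ] = − ũ₁(x)⁻¹ (G(x)F′(x)G(x) + G′(x)) F(x) u₁(x,λ). -/

import Mathlib

/-!
Write `P = 1 - G F`. Since `F G = 1`, `P G = 0`, so `P` kills the term `λ G F u₁` coming from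
the derivative of `u₁`, and the derivative `ũ₁⁻¹ G F'` of `ũ₁⁻¹` combines with
`P' = -(G' F + G F')` to give `ũ₁⁻¹ (G F' P - G' F - G F') = -ũ₁⁻¹ (G F' G + G') F`.
-/

open Set Matrix

attribute [local instance] Matrix.normedAddCommGroup Matrix.normedSpace

section Calculus

variable {𝕜 : Type*} [NontriviallyNormedField 𝕜] {A : Type*} {s : Set 𝕜} {x : 𝕜}

theorem hasDerivWithinAt_matrix {m n : Type*} [Fintype n] [NormedAddCommGroup A]
    [NormedSpace 𝕜 A] {f : 𝕜 → Matrix m n A} {f' : Matrix m n A} :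
    HasDerivWithinAt f f' s x ↔ ∀ i j, HasDerivWithinAt (fun y => f y i j) (f' i j) s x :=
  hasDerivWithinAt_pi.trans <| forall_congr' fun _ => hasDerivWithinAt_pi

theorem HasDerivWithinAt.matrix_mul {l m n : Type*} [Fintype m] [Fintype n] [NormedRing A]
    [NormedAlgebra 𝕜 A] {f : 𝕜 → Matrix l m A} {g : 𝕜 → Matrix m n A} {f' : Matrix l m A}
    {g' : Matrix m n A} (hf : HasDerivWithinAt f f' s x) (hg : HasDerivWithinAt g g' s x) :
    HasDerivWithinAt (fun y => f y * g y) (f' * g x + f x * g') s x := by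
  rw [hasDerivWithinAt_matrix] at hf hg ⊢
  intro i j
  simpa only [Matrix.add_apply, Matrix.mul_apply, Finset.sum_add_distrib] using
    HasDerivWithinAt.fun_sum fun k (_ : k ∈ Finset.univ) => (hf i k).fun_mul (hg k j)

/-- The derivative does not depend on the norm chosen on matrices, so it can be computed with the
operator norm, for which the matrices form a Banach algebra. -/
theorem HasDerivWithinAt.matrix_inv {n : Type*} [Fintype n] [DecidableEq n] [NormedCommRing A]
    [NormedAlgebra 𝕜 A] [CompleteSpace A] {f : 𝕜 → Matrix n n A} {f' : Matrix n n A}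
    (hf : HasDerivWithinAt f f' s x) (hx : IsUnit (f x)) :
    HasDerivWithinAt (fun y => (f y)⁻¹) (-((f x)⁻¹ * f' * (f x)⁻¹)) s x := by
  let _ := Matrix.linftyOpNormedRing (n := n) (α := A)
  let _ := Matrix.linftyOpNormedAlgebra (n := n) (α := A) (R := 𝕜)
  have : HasSummableGeomSeries (Matrix n n A) :=
    @instHasSummableGeomSeriesOfCompleteSpace _ _ (inferInstanceAs (CompleteSpace (n → n → A)))
  obtain ⟨u, hu⟩ := hx
  have hinv := hasFDerivAt_ringInverse (𝕜 := 𝕜) u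
  rw [hu] at hinv
  have hcomp := hinv.comp_hasDerivWithinAt x hf
  simp only [_root_.neg_apply, ContinuousLinearMap.mulLeftRight_apply] at hcomp
  simp only [nonsing_inv_eq_ringInverse, ← hu, Ring.inverse_unit]
  exact hcomp

end Calculus

theorem Matrix.one_sub_mul_mul_eq_zero {m n R : Type*} [Fintype m] [Fintype n] [DecidableEq m]
    [DecidableEq n] [Ring R] {F : Matrix m n R} {G : Matrix n m R} (hFG : F * G = 1) :
    (1 - G * F) * G = 0 := by
  rw [Matrix.sub_mul, Matrix.one_mul, Matrix.mul_assoc, hFG, Matrix.mul_one, sub_self]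

theorem stmt_14_general {r p : ℕ} {T : ℝ} (lam : ℂ)
    (F F' : ℝ → Matrix (Fin r) (Fin p) ℂ) (G G' : ℝ → Matrix (Fin p) (Fin r) ℂ)
    (hFder : ∀ x ∈ Icc (0:ℝ) T, HasDerivWithinAt F (F' x) (Icc 0 T) x)
    (hGder : ∀ x ∈ Icc (0:ℝ) T, HasDerivWithinAt G (G' x) (Icc 0 T) x)
    (hFG : ∀ x ∈ Icc (0:ℝ) T, F x * G x = 1)
    (u₁ tu : ℝ → Matrix (Fin p) (Fin p) ℂ)
    (hu₁ : ∀ x ∈ Icc (0:ℝ) T,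
      HasDerivWithinAt u₁ (lam • (G x * F x * u₁ x)) (Icc 0 T) x)
    (htu : ∀ x ∈ Icc (0:ℝ) T,
      HasDerivWithinAt tu (-(G x * F' x * tu x)) (Icc 0 T) x)
    (htuinv : ∀ x ∈ Icc (0:ℝ) T, IsUnit (tu x)) :
    ∀ x ∈ Icc (0:ℝ) T,
      HasDerivWithinAt (fun y => (tu y)⁻¹ * (1 - G y * F y) * u₁ y)
        (-((tu x)⁻¹ * (G x * F' x * G x + G' x) * (F x * u₁ x))) (Icc 0 T) x := by
  intro x hx
  have htu_inv : tu x * (tu x)⁻¹ = 1 :=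
    mul_nonsing_inv _ ((isUnit_iff_isUnit_det _).mp (htuinv x hx))
  have hinv : HasDerivWithinAt (fun y => (tu y)⁻¹) ((tu x)⁻¹ * (G x * F' x)) (Icc 0 T) x := by
    simpa only [Matrix.mul_neg, Matrix.neg_mul, neg_neg, Matrix.mul_assoc, htu_inv,
      Matrix.mul_one] using (htu x hx).matrix_inv (htuinv x hx)
  have hproj := ((hGder x hx).matrix_mul (hFder x hx)).const_sub (1 : Matrix (Fin p) (Fin p) ℂ)
  convert (hinv.matrix_mul hproj).matrix_mul (hu₁ x hx) using 1
  have hkill : (1 - G x * F x) * (lam • (G x * F x * u₁ x)) = 0 := by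
    rw [Matrix.mul_smul, ← Matrix.mul_assoc, ← Matrix.mul_assoc,
      one_sub_mul_mul_eq_zero (hFG x hx), Matrix.zero_mul, Matrix.zero_mul, smul_zero]
  rw [Matrix.mul_assoc _ (1 - G x * F x), hkill, Matrix.mul_zero, add_zero]
  simp only [Matrix.mul_sub, Matrix.sub_mul, Matrix.mul_one, Matrix.mul_add, Matrix.add_mul,
    Matrix.mul_neg, Matrix.neg_mul, Matrix.mul_assoc]
  abel

theorem stmt_14 {r p : ℕ} (hr : 0 < r) (hp : 0 < p) {T : ℝ} (hT : 0 < T) (lam : ℂ)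
    (F F' : ℝ → Matrix (Fin r) (Fin p) ℂ) (G G' : ℝ → Matrix (Fin p) (Fin r) ℂ)
    (hFder : ∀ x ∈ Icc (0:ℝ) T, HasDerivWithinAt F (F' x) (Icc 0 T) x)
    (hGder : ∀ x ∈ Icc (0:ℝ) T, HasDerivWithinAt G (G' x) (Icc 0 T) x)
    (hFcont : ContinuousOn F' (Icc 0 T)) (hGcont : ContinuousOn G' (Icc 0 T))
    (hFG : ∀ x ∈ Icc (0:ℝ) T, F x * G x = 1)
    (u₁ tu : ℝ → Matrix (Fin p) (Fin p) ℂ)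
    (hu₁ : ∀ x ∈ Icc (0:ℝ) T,
      HasDerivWithinAt u₁ (lam • (G x * F x * u₁ x)) (Icc 0 T) x)
    (hu₁0 : u₁ 0 = 1)
    (htu : ∀ x ∈ Icc (0:ℝ) T,
      HasDerivWithinAt tu (-(G x * F' x * tu x)) (Icc 0 T) x)
    (htu0 : tu 0 = 1)
    (hu₁inv : ∀ x ∈ Icc (0:ℝ) T, IsUnit (u₁ x))
    (htuinv : ∀ x ∈ Icc (0:ℝ) T, IsUnit (tu x)) :
    ∀ x ∈ Icc (0:ℝ) T,
      HasDerivWithinAt (fun y => (tu y)⁻¹ * (1 - G y * F y) * u₁ y)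
        (-((tu x)⁻¹ * (G x * F' x * G x + G' x) * (F x * u₁ x))) (Icc 0 T) x :=
  stmt_14_general lam F F' G G' hFder hGder hFG u₁ tu hu₁ htu htuinv
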